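/- Given bipartite graphs (S_h ∪ [n], E_h) for h ∈ [t] where every vertex of S_h has degree 3, the composed Clever Shopper instance (with identifier books x^i_j, identifier shops σ_j for j ∈ J = {0,1}×[⌈log t⌉], prices T+1, per-shop discounts equal to degree at thresholds degree·(T+1), budget T·n') is a yes-instance if and only if some h ∈ [t] admits an exact cover, i.e., a subset S'_h ⊆ S_h such that every i ∈ [n] has exactly one neighbor in S'_h. -/

import Mathlib

/-!
Buying out a shop earns a discount equal to its degree, and the bought-out shops have disjoint
stocks, so the budget `T n'` is met exactly when every visited shop is bought out. In such a plan
book `i` is bought from a set shop `(h_i, c_i)` with `i ∈ c_i`, and the identifier books force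
`Key (h_i + 1) ⊆ Key (h_{i'} + 1)`: for `j ∈ Key (h_i + 1)` the book `x^{i'}_j` can go neither to
`σ_j` (which would take `x^i_j` from the bought-out shop of `i`) nor to a set shop other than
that of `i'`. Hence all `h_i` coincide and the `c_i` form an exact cover of instance `h`.
Conversely an exact cover of `h`, with `σ_j` taking the identifier books for `j ∉ Key (h + 1)`,
is a bought-out plan.
-/

open Finset

section ShoppingPlan

variable {Book Shop : Type*} [Fintype Book] [DecidableEq Shop]

def stock (sells : Shop → Book → Bool) (s : Shop) : Finset Book := {b | sells s b = true}

def basket (g : Book → Shop) (s : Shop) : Finset Book := {b | g b = s}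

def BuysOut (sells : Shop → Book → Bool) (g : Book → Shop) : Prop :=
  ∀ b b', sells (g b) b' = true → g b' = g b

variable {sells : Shop → Book → Bool} {g : Book → Shop}

lemma basket_subset_stock (hg : ∀ b, sells (g b) b = true) (s : Shop) :
    basket g s ⊆ stock sells s := by
  intro b hb
  simp only [basket, stock, mem_filter, mem_univ, true_and] at hb ⊢
  exact hb ▸ hg b

lemma card_stock_le_card_basket_iff (hg : ∀ b, sells (g b) b = true) (s : Shop) :
    #(stock sells s) ≤ #(basket g s) ↔ stock sells s ⊆ basket g s := by
  rw [eq_iff_card_le_of_subset (basket_subset_stock hg s)]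
  exact ⟨fun h => h.symm.subset, fun h => (subset_antisymm h (basket_subset_stock hg s)).symm⟩

theorem cost_le_budget_iff_buysOut [Fintype Shop] (hg : ∀ b, sells (g b) b = true) (T : ℕ) :
    ((T : ℤ) + 1) * Fintype.card Book -
        ∑ s ∈ {s | #(stock sells s) * (T + 1) ≤ #(basket g s) * (T + 1)},
          (#(stock sells s) : ℤ) ≤ T * Fintype.card Book ↔
      BuysOut sells g := by
  set F : Finset Shop := {s | #(stock sells s) * (T + 1) ≤ #(basket g s) * (T + 1)}
  have hF : ∀ s, s ∈ F ↔ stock sells s ⊆ basket g s := fun s => by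
    simp only [F, mem_filter, mem_univ, true_and, Nat.mul_le_mul_right_iff T.succ_pos,
      card_stock_le_card_basket_iff hg]
  have hdiscount : ∑ s ∈ F, #(stock sells s) = #{b | g b ∈ F} := by
    rw [← sum_card_fiberwise_eq_card_filter]
    exact sum_congr rfl fun s hs => congrArg card (subset_antisymm
      (basket_subset_stock hg s) ((hF s).1 hs)).symm
  calc _ ↔ Fintype.card Book ≤ #{b | g b ∈ F} := by
        rw [← hdiscount, ← Nat.cast_le (α := ℤ)]
        push_cast
        constructor <;> intro h <;> linarith
    _ ↔ ∀ b, g b ∈ F := by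
        rw [← card_univ, (card_filter_le _ _).ge_iff_eq, card_filter_eq_iff]
        simp only [mem_univ, forall_const]
    _ ↔ BuysOut sells g := by
        simp only [hF, BuysOut, subset_iff, stock, basket, mem_filter, mem_univ, true_and]

end ShoppingPlan

section Composition

variable {t n L : ℕ}

def bitKey (L m : ℕ) : Finset (Bool × Fin L) := {p | m.testBit p.2 = p.1}

@[simp]
lemma mem_bitKey {m : ℕ} {p : Bool × Fin L} : p ∈ bitKey L m ↔ m.testBit p.2 = p.1 := by
  simp [bitKey]

lemma eq_of_bitKey_eq {a b : ℕ} (ha : a < 2 ^ L) (hb : b < 2 ^ L)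
    (hab : bitKey L a = bitKey L b) : a = b := by
  refine Nat.eq_of_testBit_eq fun p => ?_
  by_cases hp : p < L
  · have := congrArg (((a.testBit p, ⟨p, hp⟩) : Bool × Fin L) ∈ ·) hab
    exact (by simpa using this : b.testBit p = a.testBit p).symm
  · have hL : 2 ^ L ≤ 2 ^ p := Nat.pow_le_pow_right two_pos (not_lt.1 hp)
    rw [Nat.testBit_eq_false_of_lt (ha.trans_le hL), Nat.testBit_eq_false_of_lt (hb.trans_le hL)]

/-- Shop `inl j` is `σ_j` and book `inl (i, j)` is `x^i_j`; shop `inr (h, c)` is the shop of the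
set `c` in instance `h`, and sells nothing unless `c ∈ C h`. -/
def composedSells (C : Fin t → Finset (Finset (Fin n))) (L : ℕ) :
    (Bool × Fin L) ⊕ (Fin t × Finset (Fin n)) → (Fin n × (Bool × Fin L)) ⊕ Fin n → Bool
  | .inl j, .inl (_, j') => j' == j
  | .inl _, .inr _ => false
  | .inr (h, c), .inl (i, j) =>
      decide (c ∈ C h) && decide (i ∈ c) && decide (j ∈ bitKey L (h.val + 1))
  | .inr (h, c), .inr i => decide (c ∈ C h) && decide (i ∈ c)

variable {C : Fin t → Finset (Finset (Fin n))}

@[simp]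
lemma composedSells_inl_inl {j j' : Bool × Fin L} {i : Fin n} :
    composedSells C L (.inl j) (.inl (i, j')) = true ↔ j' = j := by
  simp [composedSells]

@[simp]
lemma composedSells_inl_inr {j : Bool × Fin L} {i : Fin n} :
    composedSells C L (.inl j) (.inr i) = false := rfl

@[simp]
lemma composedSells_inr_inl {h : Fin t} {c : Finset (Fin n)} {i : Fin n} {j : Bool × Fin L} :
    composedSells C L (.inr (h, c)) (.inl (i, j)) = true ↔
      c ∈ C h ∧ i ∈ c ∧ j ∈ bitKey L (h.val + 1) := by
  simp [composedSells, and_assoc]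

@[simp]
lemma composedSells_inr_inr {h : Fin t} {c : Finset (Fin n)} {i : Fin n} :
    composedSells C L (.inr (h, c)) (.inr i) = true ↔ c ∈ C h ∧ i ∈ c := by
  simp [composedSells]

variable {g : (Fin n × (Bool × Fin L)) ⊕ Fin n → (Bool × Fin L) ⊕ (Fin t × Finset (Fin n))}

lemma exists_shop_of_item (hg : ∀ b, composedSells C L (g b) b = true) (i : Fin n) :
    ∃ h c, g (.inr i) = .inr (h, c) ∧ c ∈ C h ∧ i ∈ c := by
  have hi := hg (.inr i)
  rcases hgi : g (.inr i) with j | ⟨h, c⟩ <;> rw [hgi] at hi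
  · simp at hi
  · exact ⟨h, c, rfl, by simpa using hi⟩

lemma bitKey_subset_of_buysOut (hg : ∀ b, composedSells C L (g b) b = true)
    (hbuy : BuysOut (composedSells C L) g) {i i' : Fin n} {h h' : Fin t} {c c' : Finset (Fin n)}
    (hi : g (.inr i) = .inr (h, c)) (hc : c ∈ C h) (hic : i ∈ c)
    (hi' : g (.inr i') = .inr (h', c')) :
    bitKey L (h.val + 1) ⊆ bitKey L (h'.val + 1) := by
  intro j hj
  have hij : g (.inl (i, j)) = .inr (h, c) :=
    hi ▸ hbuy (.inr i) (.inl (i, j)) (by simp [hi, hc, hic, hj])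
  have hs := hg (.inl (i', j))
  rcases hgj : g (.inl (i', j)) with j₂ | ⟨h₂, c₂⟩ <;> rw [hgj] at hs
  · obtain rfl : j = j₂ := by simpa using hs
    have := hbuy (.inl (i', j)) (.inl (i, j)) (by simp [hgj])
    rw [hgj, hij] at this
    exact absurd this Sum.inr_ne_inl
  · rw [composedSells_inr_inl] at hs
    have := hbuy (.inl (i', j)) (.inr i') (by simp [hgj, hs.1, hs.2.1])
    rw [hgj, hi'] at this
    cases this
    exact hs.2.2

lemma exists_exactCover_of_buysOut (ht : 0 < t) (hL : t < 2 ^ L)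
    (hg : ∀ b, composedSells C L (g b) b = true) (hbuy : BuysOut (composedSells C L) g) :
    ∃ h, ∃ S' ⊆ C h, ∀ i, ∃! c, c ∈ S' ∧ i ∈ c := by
  choose H Cs hgi hC hmem using exists_shop_of_item hg
  have hbound : ∀ i, (H i).val + 1 < 2 ^ L := fun i => Nat.lt_of_le_of_lt (H i).isLt hL
  have hconst : ∀ i i', H i = H i' := fun i i' =>
    Fin.ext <| Nat.succ_injective <| eq_of_bitKey_eq (hbound i) (hbound i') <| subset_antisymm
      (bitKey_subset_of_buysOut hg hbuy (hgi i) (hC i) (hmem i) (hgi i'))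
      (bitKey_subset_of_buysOut hg hbuy (hgi i') (hC i') (hmem i') (hgi i))
  rcases isEmpty_or_nonempty (Fin n) with hn | ⟨⟨i₀⟩⟩
  · exact ⟨⟨0, ht⟩, ∅, empty_subset _, isEmptyElim⟩
  refine ⟨H i₀, univ.image Cs, ?_, fun i => ⟨Cs i, ⟨mem_image_of_mem _ (mem_univ i), hmem i⟩, ?_⟩⟩
  · rintro _ hc
    obtain ⟨i, -, rfl⟩ := mem_image.1 hc
    exact hconst i i₀ ▸ hC i
  · rintro _ ⟨hc, hic⟩
    obtain ⟨i', -, rfl⟩ := mem_image.1 hc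
    have := hbuy (.inr i') (.inr i) (by simp [hgi i', hC i', hic])
    rw [hgi, hgi] at this
    exact (congrArg Prod.snd (Sum.inr_injective this)).symm

lemma exists_buysOut_of_exactCover {h : Fin t} {S' : Finset (Finset (Fin n))} (hS' : S' ⊆ C h)
    (hcov : ∀ i, ∃! c, c ∈ S' ∧ i ∈ c) :
    ∃ g : (Fin n × (Bool × Fin L)) ⊕ Fin n → (Bool × Fin L) ⊕ (Fin t × Finset (Fin n)),
      (∀ b, composedSells C L (g b) b = true) ∧ BuysOut (composedSells C L) g := by
  choose f hf hfu using hcov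
  have hshop : ∀ i i', i' ∈ f i → f i' = f i := fun i i' hi' => (hfu i' _ ⟨(hf i).1, hi'⟩).symm
  refine ⟨Sum.elim (fun p => if p.2 ∈ bitKey L (h.val + 1) then .inr (h, f p.1) else .inl p.2)
    (fun i => .inr (h, f i)), ?_, ?_⟩
  · rintro (⟨i, j⟩ | i)
    · dsimp only [Sum.elim_inl]
      split_ifs with hj <;> simp [hj, hS' (hf i).1, (hf i).2]
    · simp [hS' (hf i).1, (hf i).2]
  · clear hfu
    rintro (⟨i, j⟩ | i) (⟨i', j'⟩ | i') hs <;> dsimp only [Sum.elim_inl, Sum.elim_inr] at hs ⊢ <;>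
      (try split_ifs at hs ⊢) <;> simp_all <;> exact hshop _ _ hs.2

end Composition

theorem stmt_16 (t n T : ℕ) (ht : 1 ≤ t)
    (C : Fin t → Finset (Finset (Fin n))) :
    let L := Nat.size t
    let J := Bool × Fin L
    let Key : ℕ → Finset J := fun h =>
      Finset.univ.filter (fun p => h.testBit p.2.val = p.1)
    let Book := (Fin n × J) ⊕ Fin n
    let Shop := J ⊕ (Fin t × Finset (Fin n))
    let sells : Shop → Book → Bool := fun s b =>
      match s, b with
      | .inl j, .inl (_, j') => j' == j
      | .inl _, .inr _ => false
      | .inr (h, c), .inl (i, j) =>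
          decide (c ∈ C h) && decide (i ∈ c) && decide (j ∈ Key (h.val + 1))
      | .inr (h, c), .inr i => decide (c ∈ C h) && decide (i ∈ c)
    let deg : Shop → ℕ := fun s => (Finset.univ.filter (fun b => sells s b = true)).card
    let n' : ℕ := Fintype.card Book
    (∃ g : Book → Shop, (∀ b, sells (g b) b = true) ∧
        (((T : ℤ) + 1) * (n' : ℤ) -
            ∑ s ∈ Finset.univ.filter
                (fun s : Shop =>
                  deg s * (T + 1) ≤
                    (Finset.univ.filter (fun b : Book => g b = s)).card * (T + 1)),
              (deg s : ℤ)
          ≤ (T : ℤ) * (n' : ℤ))) ↔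
      (∃ h : Fin t, ∃ S' ⊆ C h, ∀ i : Fin n, ∃! c, c ∈ S' ∧ i ∈ c) := by
  intro L J Key Book Shop sells deg n'
  have hsells : sells = composedSells C L := by
    funext s b
    rcases s with j | ⟨h, c⟩ <;> rcases b with ⟨i, j'⟩ | i <;> rfl
  have hdeg : deg = fun s => #(stock sells s) := rfl
  have hn' : n' = Fintype.card Book := rfl
  clear_value n' deg sells
  subst hn' hdeg hsells
  refine (exists_congr fun g => and_congr_right fun hg => cost_le_budget_iff_buysOut hg T).trans ?_
  exact ⟨fun ⟨_, hg, hbuy⟩ => exists_exactCover_of_buysOut ht (Nat.lt_size_self t) hg hbuy,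
    fun ⟨_, _, hS', hcov⟩ => exists_buysOut_of_exactCover hS' hcov⟩
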